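/- arXiv:1702.06684 — 2 statements merged into one kernel-verified Lean document; each statement's English description precedes it below -/
import Mathlib

section
/- If n is even and w is an odd word of rank n (f_w odd), then the only word w' of rank n+1 covering w with f_{w'} odd is 1w. If n is odd and w is an odd word of rank n, then w = 1v for a unique odd word v of rank n−1, and the words of rank n+1 covering w with odd f are exactly 11v and 2v. -/
/-- The list of words covered by `w` in the Young-Fibonacci lattice. -/
def preds : List ℕ → List (List ℕ)
  | [] => []
  | 1 :: t => [t]
  | 2 :: t => (1 :: t) :: (preds t).map (fun u => 2 :: u)
  | _ :: _ => []

theorem preds_sum_lt : ∀ (w u : List ℕ), u ∈ preds w → u.sum < w.sum := by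
  intro w
  induction w using preds.induct with
  | case1 => intro u h; simp [preds] at h
  | case2 t => intro u h; simp [preds] at h; subst h; simp
  | case3 t ih =>
      intro u h
      simp [preds] at h
      rcases h with h | ⟨v, hv, rfl⟩
      · subst h; simp
      · have := ih v hv; simpa using by omega
  | case4 x t h1 h2 => intro u h; simp [preds] at h

/-- The number of saturated chains from the empty word to `w`. -/
def f (w : List ℕ) : ℕ :=
  if w = [] then 1
  else ((preds w).attach.map (fun u => f u.1)).sum
termination_by w.sum
decreasing_by exact preds_sum_lt w u.1 u.2

/-- The product formula. -/
def fprod (w : List ℕ) : ℕ :=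
  ∏ i ∈ Finset.univ.filter (fun i : Fin w.length => w.get i = 2), ((w.drop i.1).sum - 1)

/-!
Reducing mod 2 the recursion `f (2t) = f t + ∑_{u ⋖ t} f (2u)` gives, by induction on the rank
of `t`, that `f (2t)` is `f t` mod 2 when `t` has even rank and is even when `t` has odd rank.
Since `f (1t) = f t` and a word beginning with any other letter has `f = 0`, every odd word of
odd rank begins with `1`. For `w` of odd rank this gives `w = 1v`; for an odd cover of `w` of
even rank it says that the cover is `1w`. The covers of `1v` are `11v` and `2v`, and both are odd
because `v` has even rank.
-/
theorem sum_add_one_of_mem_preds {w u : List ℕ} (h : u ∈ preds w) : u.sum + 1 = w.sum := by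
  induction w using preds.induct generalizing u with
  | case1 => simp [preds] at h
  | case2 t => simp only [preds, List.mem_singleton] at h; simp [h, add_comm]
  | case3 t ih =>
    simp only [preds, List.mem_cons, List.mem_map] at h
    rcases h with rfl | ⟨v, hv, rfl⟩
    · simp only [List.sum_cons]; omega
    · simp only [List.sum_cons]; have := ih hv; omega
  | case4 x t => simp [preds] at h

theorem preds_cons_eq_nil {x : ℕ} (t : List ℕ) (h₁ : x ≠ 1) (h₂ : x ≠ 2) :
    preds (x :: t) = [] := by
  rcases x with _ | _ | _ | x <;> simp_all [preds]

theorem mem_preds_one_cons {t u : List ℕ} : u ∈ preds (1 :: t) ↔ u = t := by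
  simp [preds]

theorem one_cons_mem_preds_iff {v w : List ℕ} :
    1 :: v ∈ preds w ↔ w = 1 :: 1 :: v ∨ w = 2 :: v := by
  rcases w with _ | ⟨_ | _ | _ | x, t⟩ <;> simp [preds] <;> exact eq_comm

theorem f_eq_sum_preds {w : List ℕ} (h : w ≠ []) : f w = ((preds w).map f).sum := by
  rw [f, if_neg h, List.attach_map_val]

theorem f_one_cons (t : List ℕ) : f (1 :: t) = f t := by
  rw [f_eq_sum_preds (List.cons_ne_nil 1 t)]
  simp [preds]

theorem f_two_cons (t : List ℕ) :
    f (2 :: t) = f t + ((preds t).map fun u => f (2 :: u)).sum := by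
  rw [f_eq_sum_preds (List.cons_ne_nil 2 t)]
  simp [preds, Function.comp_def, f_one_cons]

theorem f_cons_eq_zero {x : ℕ} (t : List ℕ) (h₁ : x ≠ 1) (h₂ : x ≠ 2) : f (x :: t) = 0 := by
  rw [f_eq_sum_preds (List.cons_ne_nil x t), preds_cons_eq_nil t h₁ h₂, List.map_nil,
    List.sum_nil]

theorem cast_f_two_cons (t : List ℕ) :
    (f (2 :: t) : ZMod 2) = if Even t.sum then (f t : ZMod 2) else 0 := by
  induction h : t.sum using Nat.strong_induction_on generalizing t with
  | _ n ih =>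
  have ih_preds : ∀ u ∈ preds t,
      (f (2 :: u) : ZMod 2) = if Even n then 0 else (f u : ZMod 2) := by
    intro u hu
    have hsum := sum_add_one_of_mem_preds hu
    have hparity : Even u.sum ↔ ¬ Even n := by rw [← h, ← hsum, Nat.even_add_one, not_not]
    rw [ih u.sum (by omega) u rfl]
    simp only [hparity, ite_not]
  rw [f_two_cons, Nat.cast_add, Nat.cast_list_sum, List.map_map, Function.comp_def,
    List.map_congr_left (g := fun u => if Even n then 0 else (f u : ZMod 2)) ih_preds]
  by_cases hn : Even n
  · simp [hn]
  · have ht : t ≠ [] := by rintro rfl; simp [← h] at hn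
    have hsum : ((preds t).map fun u => (f u : ZMod 2)).sum = f t := by
      rw [f_eq_sum_preds ht, Nat.cast_list_sum, List.map_map, Function.comp_def]
    simp only [hn, if_false, hsum, CharTwo.add_self_eq_zero]

theorem odd_f_two_cons_iff (t : List ℕ) : Odd (f (2 :: t)) ↔ Even t.sum ∧ Odd (f t) := by
  rw [← ZMod.natCast_ne_zero_iff_odd, ← ZMod.natCast_ne_zero_iff_odd, cast_f_two_cons]
  by_cases ht : Even t.sum <;> simp [ht]

theorem exists_eq_one_cons_of_odd_f {w : List ℕ} (hf : Odd (f w)) (hs : Odd w.sum) :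
    ∃ v, w = 1 :: v := by
  rcases w with _ | ⟨x, v⟩
  · simp at hs
  by_cases h₁ : x = 1
  · exact ⟨v, by rw [h₁]⟩
  by_cases h₂ : x = 2
  · subst h₂
    have hv : ¬ Even v.sum := by simpa [parity_simps, Nat.odd_iff] using hs
    exact absurd ((odd_f_two_cons_iff v).1 hf).1 hv
  · simp [f_cons_eq_zero v h₁ h₂] at hf

theorem one_cons_mem_preds_and_odd_f_iff {v w : List ℕ} (hv : Even v.sum) (hf : Odd (f v)) :
    (1 :: v ∈ preds w ∧ Odd (f w)) ↔ w = 1 :: 1 :: v ∨ w = 2 :: v := by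
  rw [one_cons_mem_preds_iff, and_iff_left_iff_imp]
  rintro (rfl | rfl)
  · simpa [f_one_cons] using hf
  · exact (odd_f_two_cons_iff v).2 ⟨hv, hf⟩

theorem macdonald_tree_branching_general (n : ℕ) (w : List ℕ)
    (hr : w.sum = n) (hodd : Odd (f w)) :
    (Even n → ∀ w' : List ℕ, (∀ x ∈ w', x = 1 ∨ x = 2) →
      ((w ∈ preds w' ∧ Odd (f w')) ↔ w' = 1 :: w)) ∧
    (Odd n → ∃! v : List ℕ, w = 1 :: v ∧ Odd (f v) ∧ v.sum = n - 1 ∧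
      ∀ w' : List ℕ, (∀ x ∈ w', x = 1 ∨ x = 2) →
        ((w ∈ preds w' ∧ Odd (f w')) ↔ (w' = 1 :: 1 :: v ∨ w' = 2 :: v))) := by
  subst hr
  refine ⟨fun hn w' _ => ⟨?_, ?_⟩, fun hn => ?_⟩
  · rintro ⟨hw, hw'⟩
    have hs : Odd w'.sum := sum_add_one_of_mem_preds hw ▸ hn.add_one
    obtain ⟨v, rfl⟩ := exists_eq_one_cons_of_odd_f hw' hs
    rw [mem_preds_one_cons.1 hw]
  · rintro rfl
    exact ⟨mem_preds_one_cons.2 rfl, by rwa [f_one_cons]⟩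
  · obtain ⟨v, rfl⟩ := exists_eq_one_cons_of_odd_f hodd hn
    rw [f_one_cons] at hodd
    have hv : Even v.sum := by simpa [parity_simps] using hn
    refine ⟨v, ⟨rfl, hodd, by simp, fun w' _ => one_cons_mem_preds_and_odd_f_iff hv hodd⟩, ?_⟩
    rintro v' ⟨hv', -⟩
    exact (List.cons_injective hv').symm

/-- branching of the Macdonald tree in the Young-Fibonacci graph. -/
theorem macdonald_tree_branching (n : ℕ) (w : List ℕ)
    (hw : ∀ x ∈ w, x = 1 ∨ x = 2) (hr : w.sum = n) (hodd : Odd (f w)) :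
    (Even n → ∀ w' : List ℕ, (∀ x ∈ w', x = 1 ∨ x = 2) →
      ((w ∈ preds w' ∧ Odd (f w')) ↔ w' = 1 :: w)) ∧
    (Odd n → ∃! v : List ℕ, w = 1 :: v ∧ Odd (f v) ∧ v.sum = n - 1 ∧
      ∀ w' : List ℕ, (∀ x ∈ w', x = 1 ∨ x = 2) →
        ((w ∈ preds w' ∧ Odd (f w')) ↔ (w' = 1 :: 1 :: v ∨ w' = 2 :: v))) :=
  macdonald_tree_branching_general n w hr hodd
end

section
/- For every k ≥ 1 and every n ≥ 2^{k−1} + 2, the multiset {f_w mod 2^k : w a word over {1,2} of rank n with f_w odd} is equidistributed over the odd residue classes modulo 2^k; that is, each odd residue class mod 2^k occurs exactly 2^{⌊n/2⌋}/2^{k−1} times. -/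
/-!
Reading a word from the left, `fprod (1 :: w) = fprod w` and
`fprod (2 :: w) = (w.sum + 1) * fprod w`. As `w.sum + 1` is odd only for `w.sum` even, the odd
values over the words of rank `n` form the multiset of products `∏_{j ∈ T} (2j + 1)` over
`T ⊆ {0, …, ⌊n/2⌋ - 1}`. Multiplying by a factor `2j + 1` whose square is `1` modulo `M` permutes
this multiset modulo `M` (toggle `j ∈ T`). For `2j = 2^(k+1)` and `M = 2^(k+2)` this multiplication
is `x ↦ x + 2^(k+1)` on odd `x`, so both lifts of an odd class modulo `2^(k+1)` are equally
frequent, and induction on `k` gives equidistribution.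
-/

lemma fprod_cons (x : ℕ) (w : List ℕ) :
    fprod (x :: w) = (if x = 2 then x + w.sum - 1 else 1) * fprod w := by
  unfold fprod
  rw [Finset.prod_filter, Finset.prod_filter]
  show (∏ a : Fin (w.length + 1),
      if (x :: w).get a = 2 then ((x :: w).drop a.1).sum - 1 else 1) = _
  rw [Fin.prod_univ_succ]
  simp

lemma fprod_one_cons (w : List ℕ) : fprod (1 :: w) = fprod w := by
  simp [fprod_cons]

lemma fprod_two_cons (w : List ℕ) : fprod (2 :: w) = (w.sum + 1) * fprod w := by
  rw [fprod_cons, if_pos rfl]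
  congr 1
  omega

def oddProducts : ℕ → Multiset ℕ
  | 0 => {1}
  | m + 1 => oddProducts m + (oddProducts m).map ((2 * m + 1) * ·)

lemma card_oddProducts (m : ℕ) : Multiset.card (oddProducts m) = 2 ^ m := by
  induction m with
  | zero => rfl
  | succ m ih => simp [oddProducts, ih, pow_succ, mul_two]

lemma odd_of_mem_oddProducts {m x : ℕ} (hx : x ∈ oddProducts m) : Odd x := by
  induction m generalizing x with
  | zero => simp_all [oddProducts]
  | succ m ih =>
    rcases Multiset.mem_add.1 hx with hx | hx
    · exact ih hx
    · obtain ⟨y, hy, rfl⟩ := Multiset.mem_map.1 hx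
      exact (odd_two_mul_add_one m).mul (ih hy)

lemma map_mul_map_natCast_oddProducts {R : Type*} [CommSemiring R] {j m : ℕ} (hj : j < m)
    (hu : ((2 * j + 1 : ℕ) : R) * (2 * j + 1 : ℕ) = 1) :
    ((oddProducts m).map (Nat.cast : ℕ → R)).map (· * ((2 * j + 1 : ℕ) : R)) =
      (oddProducts m).map Nat.cast := by
  induction m with
  | zero => omega
  | succ m ih =>
    set T := (oddProducts m).map (Nat.cast : ℕ → R)
    have hT : (oddProducts (m + 1)).map (Nat.cast : ℕ → R) =
        T + T.map (((2 * m + 1 : ℕ) : R) * ·) := by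
      simp [T, oddProducts, Multiset.map_map]
    clear_value T
    rw [hT, Multiset.map_add, Multiset.map_map]
    rcases Nat.lt_succ_iff_lt_or_eq.1 hj with hj | rfl
    · have hcomm : (· * ((2 * j + 1 : ℕ) : R)) ∘ (((2 * m + 1 : ℕ) : R) * ·) =
          (((2 * m + 1 : ℕ) : R) * ·) ∘ (· * ((2 * j + 1 : ℕ) : R)) := by
        funext x; simp only [Function.comp_apply, mul_assoc]
      rw [hcomm, ← Multiset.map_map, ih hj]
    · have hinvol : (· * ((2 * j + 1 : ℕ) : R)) ∘ (((2 * j + 1 : ℕ) : R) * ·) = id := by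
        funext x; simp only [Function.comp_apply, id, mul_comm _ x, mul_assoc, hu, mul_one]
      rw [hinvol, Multiset.map_id, add_comm]
      exact congrArg (T + ·) (Multiset.map_congr rfl fun x _ => mul_comm _ _)

lemma Int.dvd_iff_two_mul_dvd_or_two_mul_dvd_sub (h d : ℤ) :
    h ∣ d ↔ 2 * h ∣ d ∨ 2 * h ∣ d - h := by
  constructor
  · rintro ⟨q, rfl⟩
    obtain ⟨r, rfl | rfl⟩ := Int.even_or_odd' q
    · exact .inl ⟨r, by ring⟩
    · exact .inr ⟨r, by ring⟩
  · rintro (⟨q, hq⟩ | ⟨q, hq⟩)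
    · exact ⟨2 * q, by rw [hq]; ring⟩
    · exact ⟨2 * q + 1, by linear_combination hq⟩

lemma natCast_eq_natCast_iff_two_mul (h x i : ℕ) :
    (x : ZMod h) = i ↔ (x : ZMod (2 * h)) = i ∨ (x : ZMod (2 * h)) + h = i := by
  simp only [← Nat.cast_add, ZMod.natCast_eq_natCast_iff, Nat.modEq_iff_dvd]
  push_cast
  rw [Int.dvd_iff_two_mul_dvd_or_two_mul_dvd_sub, sub_sub]

lemma natCast_mul_add_one_of_odd {h x : ℕ} (hx : Odd x) :
    (x : ZMod (2 * h)) * (h + 1) = x + h := by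
  obtain ⟨y, rfl⟩ := hx
  have h0 : ((2 * h : ℕ) : ZMod (2 * h)) = 0 := ZMod.natCast_self _
  push_cast at h0 ⊢
  linear_combination (y : ZMod (2 * h)) * h0

lemma two_mul_countP_natCast_eq {s : Multiset ℕ} {h : ℕ} (hh : 0 < h)
    (hodd : ∀ x ∈ s, Odd x)
    (hinv : (s.map (Nat.cast : ℕ → ZMod (2 * h))).map (· * ((h + 1 : ℕ) : ZMod (2 * h))) =
      s.map Nat.cast)
    (i : ℕ) :
    2 * s.countP (fun x : ℕ => (x : ZMod (2 * h)) = i) =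
      s.countP (fun x : ℕ => (x : ZMod h) = i) := by
  have hshift : s.countP (fun x : ℕ => (x : ZMod (2 * h)) + h = i) =
      s.countP (fun x : ℕ => (x : ZMod (2 * h)) = i) := by
    calc s.countP (fun x : ℕ => (x : ZMod (2 * h)) + h = i)
        = s.countP (fun x : ℕ => (x : ZMod (2 * h)) * (h + 1 : ℕ) = i) :=
          Multiset.countP_congr rfl fun x hx => by
            rw [Nat.cast_add, Nat.cast_one, natCast_mul_add_one_of_odd (hodd x hx)]
      _ = s.countP (fun x : ℕ => (x : ZMod (2 * h)) = i) := by
          have := congrArg (Multiset.countP (· = (i : ZMod (2 * h)))) hinv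
          simpa only [Multiset.map_map, Multiset.countP_eq_card_filter, Multiset.filter_map,
            Multiset.card_map, Function.comp_def] using this
  have hdisj : ∀ x ∈ s, ¬((x : ZMod (2 * h)) = i ∧ (x : ZMod (2 * h)) + h = i) := by
    rintro x - ⟨hxi, hxh⟩
    rw [hxi, add_eq_left, ZMod.natCast_eq_zero_iff] at hxh
    exact absurd (Nat.le_of_dvd hh hxh) (by omega)
  have hsplit := Multiset.filter_add_filter (fun x : ℕ => (x : ZMod (2 * h)) = i)
    (fun x : ℕ => (x : ZMod (2 * h)) + h = i) s
  rw [Multiset.filter_eq_nil.2 hdisj, add_zero] at hsplit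
  simp only [natCast_eq_natCast_iff_two_mul h, Multiset.countP_eq_card_filter] at hshift ⊢
  rw [← hsplit, Multiset.card_add, hshift, two_mul]

theorem two_pow_mul_countP_oddProducts {k m : ℕ} (hkm : 2 ^ k < 2 * m) {i : ℕ} (hi : Odd i) :
    2 ^ k * (oddProducts m).countP (fun x : ℕ => (x : ZMod (2 ^ (k + 1))) = i) = 2 ^ m := by
  induction k with
  | zero =>
    simp only [pow_zero, one_mul, ZMod.natCast_eq_one_iff_odd.2 hi]
    rw [Multiset.countP_eq_card.2 fun x hx =>
      ZMod.natCast_eq_one_iff_odd.2 (odd_of_mem_oddProducts hx), card_oddProducts]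
  | succ k ih =>
    have hj : 2 ^ (k + 1) = 2 * 2 ^ k := pow_succ' 2 k
    have hu : ((2 * 2 ^ k + 1 : ℕ) : ZMod (2 * 2 ^ (k + 1))) * (2 * 2 ^ k + 1 : ℕ) = 1 := by
      have h0 : ((4 * 2 ^ k : ℕ) : ZMod (2 * 2 ^ (k + 1))) = 0 := by
        rw [show 4 * 2 ^ k = 2 * 2 ^ (k + 1) by ring]
        exact ZMod.natCast_self _
      push_cast at h0 ⊢
      linear_combination ((2 ^ k : ZMod (2 * 2 ^ (k + 1))) + 1) * h0
    have hinv := map_mul_map_natCast_oddProducts (m := m) (by omega) hu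
    rw [← hj] at hinv
    have hstep := two_mul_countP_natCast_eq (by positivity)
      (fun x hx => odd_of_mem_oddProducts hx) hinv i
    rw [← pow_succ' 2 (k + 1)] at hstep
    rw [← ih (by omega), ← hstep]
    ring

def rankWords : ℕ → Finset (List ℕ)
  | 0 => {[]}
  | 1 => {[1]}
  | n + 2 =>
    ((rankWords (n + 1)).map ⟨(1 :: ·), List.cons_injective⟩).disjUnion
      ((rankWords n).map ⟨(2 :: ·), List.cons_injective⟩)
      (by simp [Finset.disjoint_left])

lemma mem_rankWords {n : ℕ} {w : List ℕ} :
    w ∈ rankWords n ↔ (∀ x ∈ w, x = 1 ∨ x = 2) ∧ w.sum = n := by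
  induction n using rankWords.induct generalizing w with
  | case1 =>
    cases w <;> simp [rankWords]
    omega
  | case2 =>
    rcases w with _ | ⟨x, _ | ⟨y, t⟩⟩ <;> simp [rankWords]
    · omega
    · grind
  | case3 n ih1 ih2 =>
    cases w <;> simp [rankWords, ih1, ih2]
    grind

lemma map_fprod_rankWords_add_two (n : ℕ) :
    (rankWords (n + 2)).val.map fprod =
      (rankWords (n + 1)).val.map fprod + ((rankWords n).val.map fprod).map ((n + 1) * ·) := by
  rw [rankWords, Finset.disjUnion_val, Finset.map_val, Finset.map_val, Multiset.map_add,
    Multiset.map_map, Multiset.map_map, Multiset.map_map]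
  congr 1
  · exact Multiset.map_congr rfl fun w _ => fprod_one_cons w
  · exact Multiset.map_congr rfl fun w hw => by
      simp [fprod_two_cons, (mem_rankWords.1 hw).2]

def oddValues (n : ℕ) : Multiset ℕ :=
  ((rankWords n).val.map fprod).filter Odd

lemma filter_odd_map_mul (a : ℕ) (s : Multiset ℕ) :
    (s.map (a * ·)).filter Odd = if Odd a then (s.filter Odd).map (a * ·) else 0 := by
  rw [Multiset.filter_map]
  split_ifs with ha <;> simp [Nat.odd_mul, ha]

lemma oddValues_eq_oddProducts (n : ℕ) : oddValues n = oddProducts (n / 2) := by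
  induction n using Nat.twoStepInduction with
  | zero => rfl
  | one => rfl
  | more n ih0 ih1 =>
    rw [oddValues, map_fprod_rankWords_add_two, Multiset.filter_add, filter_odd_map_mul,
      ← oddValues, ← oddValues, ih0, ih1]
    obtain ⟨m, rfl | rfl⟩ := Nat.even_or_odd' n
    · rw [if_pos (odd_two_mul_add_one m), show (2 * m + 1) / 2 = m by omega,
        show 2 * m / 2 = m by omega, show (2 * m + 2) / 2 = m + 1 by omega, oddProducts]
    · rw [if_neg (by simp [parity_simps]), show (2 * m + 1 + 1) / 2 = m + 1 by omega,
        show (2 * m + 1 + 2) / 2 = m + 1 by omega, add_zero]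

/-- Main Theorem: for `n ≥ 2^(k-1) + 2`, the residues mod `2^k` of the
`f`-values of odd words of rank `n` are equidistributed, each odd residue class
occurring `2^⌊n/2⌋ / 2^(k-1)` times. -/
theorem equidistribution_main (k n : ℕ) (hk : 1 ≤ k) (hn : 2 ^ (k - 1) + 2 ≤ n)
    (L : Finset (List ℕ))
    (hL : ∀ w : List ℕ, w ∈ L ↔ (∀ x ∈ w, x = 1 ∨ x = 2) ∧ w.sum = n ∧ Odd (fprod w)) :
    ∀ i : ℕ, Odd i → i < 2 ^ k →
      (L.filter (fun w => fprod w % 2 ^ k = i)).card = 2 ^ (n / 2) / 2 ^ (k - 1) := by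
  intro i hi hik
  obtain ⟨k, rfl⟩ : ∃ k', k = k' + 1 := ⟨k - 1, by omega⟩
  rw [Nat.add_sub_cancel] at hn ⊢
  have hLeq : L = (rankWords n).filter (fun w => Odd (fprod w)) := by
    ext w
    simp [hL, mem_rankWords, and_assoc]
  have hcount : (L.filter (fun w => fprod w % 2 ^ (k + 1) = i)).card =
      (oddValues n).countP (fun x : ℕ => (x : ZMod (2 ^ (k + 1))) = i) := by
    rw [hLeq, oddValues, Multiset.filter_map, Multiset.countP_map, Finset.card_def,
      Finset.filter_val, Finset.filter_val]
    congr 1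
    refine Multiset.filter_congr fun w _ => ?_
    rw [ZMod.natCast_eq_natCast_iff', Nat.mod_eq_of_lt hik]
  rw [hcount, oddValues_eq_oddProducts]
  exact Nat.eq_div_of_mul_eq_right (by positivity) (two_pow_mul_countP_oddProducts (by omega) hi)
end
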